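/- Let n ≥ 2 and let x_1, …, x_n be pairwise distinct elements of a field. Then ∑_{i=1}^n x_i^{n-2} / ∏_{j ≠ i} (x_i - x_j) = 0. -/
import Mathlib

open Polynomial Finset Lagrange

/-- For pairwise distinct `x_1, …, x_n` (`n ≥ 2`),
`∑_i x_i^{n-2} / ∏_{j ≠ i} (x_i - x_j) = 0`. -/
theorem sum_pow_n_sub_two_div_prod_eq_zero {K : Type*} [Field K] (n : ℕ) (hn : 2 ≤ n)
    (x : Fin n → K) (h : ∀ i j, i ≠ j → x i ≠ x j) :
    ∑ i, x i ^ (n - 2) / ∏ j ∈ Finset.univ.erase i, (x i - x j) = 0 := by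
  have hvs : Set.InjOn x (Finset.univ : Finset (Fin n)) := by
    intro i _ j _ hij
    by_contra hne
    exact h i j hne hij
  have hcard : #(Finset.univ : Finset (Fin n)) = n := by simp
  have hdeg : (X ^ (n - 2) : K[X]).degree < #(Finset.univ : Finset (Fin n)) := by
    rw [degree_X_pow, hcard]
    exact_mod_cast Nat.sub_lt (by omega) (by omega)
  have hp : (X ^ (n - 2) : K[X]) =
      interpolate Finset.univ x (fun i => x i ^ (n - 2)) := by
    have := eq_interpolate (f := (X ^ (n-2) : K[X])) hvs hdeg
    simpa using this
  have hc := congrArg (fun p => p.coeff (n - 1)) hp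
  simp only [coeff_X_pow, if_neg (by omega : ¬ n - 1 = n - 2)] at hc
  rw [interpolate_apply] at hc
  have hbasis : ∀ i : Fin n, (Lagrange.basis Finset.univ x i).coeff (n - 1)
      = (∏ j ∈ Finset.univ.erase i, (x i - x j))⁻¹ := by
    intro i
    have hnd : (Lagrange.basis Finset.univ x i).natDegree = n - 1 := by
      rw [natDegree_basis hvs (mem_univ i), hcard]
    rw [← hnd, ← leadingCoeff]
    unfold Lagrange.basis
    rw [leadingCoeff_prod]
    rw [← prod_inv_distrib]
    refine prod_congr rfl fun j hj => ?_
    unfold basisDivisor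
    rw [leadingCoeff_mul, leadingCoeff_C, (monic_X_sub_C _).leadingCoeff, mul_one]
  rw [finset_sum_coeff] at hc
  simp only [coeff_C_mul, hbasis] at hc
  rw [eq_comm]
  convert hc using 2 with i
  rw [div_eq_mul_inv]
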